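/- Let S be a finite poset and R an ideal of S. Given an R-space U, an S-space V, and a morphism f : U → res^S_R V of R-spaces given by a linear map f : U → V, define the S-space U_f with ambient space U, subspaces U(r) for r ∈ R, and subspaces f^{-1}(V(t)) for t ∈ S∖R. Then U_f is a well-defined S-space (i.e., its subspaces are order-compatible), the map f gives a morphism f̂ : U_f → V of S-spaces with res^S_R f̂ = f, and f is a proper morphism if and only if f̂ is. -/

import Mathlib

/-- An `S`-space over a field `k`: a finite-dimensional `k`-vector space together with a
monotone family of subspaces indexed by the poset `S`. -/
structure PSp (k : Type) [Field k] (S : Type) [Preorder S] where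
  carrier : Type
  [acg : AddCommGroup carrier]
  [mod : Module k carrier]
  [fin : FiniteDimensional k carrier]
  sub : S → Submodule k carrier
  mono : ∀ {s t : S}, s ≤ t → sub s ≤ sub t

attribute [instance] PSp.acg PSp.mod PSp.fin

variable {k : Type} [Field k] {S : Type} [PartialOrder S] [Fintype S]

/-- A morphism of `S`-spaces: a `k`-linear map respecting the distinguished subspaces. -/
@[ext]
structure PHom (U V : PSp k S) where
  toLinearMap : U.carrier →ₗ[k] V.carrier
  maps : ∀ s : S, ∀ x ∈ U.sub s, toLinearMap x ∈ V.sub s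

/-- Composition of morphisms of `S`-spaces. -/
def PHom.comp {U V W : PSp k S} (g : PHom V W) (f : PHom U V) : PHom U W :=
  ⟨g.toLinearMap ∘ₗ f.toLinearMap, fun s x hx => g.maps s _ (f.maps s x hx)⟩

/-- The identity morphism of an `S`-space. -/
def PHom.id (U : PSp k S) : PHom U U := ⟨LinearMap.id, fun _ _ hx => hx⟩

/-- A morphism `f : U → V` of `S`-spaces is proper if `f(U(s)) = V(s) ∩ im f` for all `s`. -/
def PHom.Proper {U V : PSp k S} (f : PHom U V) : Prop :=
  ∀ s : S, (U.sub s).map f.toLinearMap = V.sub s ⊓ LinearMap.range f.toLinearMap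

/-- The restriction functor `res^S_R` on objects. -/
def resS (R : Set S) (V : PSp k S) : PSp k ↥R where
  carrier := V.carrier
  sub r := V.sub ↑r
  mono h := V.mono h

/-- The induction functor `ind^S_R` on objects: `X(s) = Σ_{r ∈ R, r ≤ s} V(r)`. -/
def indS (R : Set S) (V : PSp k ↥R) : PSp k S where
  carrier := V.carrier
  sub s := ⨆ (r : R) (_ : (r : S) ≤ s), V.sub r
  mono := by
    intro s t h
    refine iSup_mono fun r => ?_
    exact iSup_le fun hr => le_iSup_of_le (hr.trans h) le_rfl

/-- The coinduction functor `coind^S_R` on objects: `X(s) = ∩_{r ∈ R, s ≤ r} V(r)`. -/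
def coindS (R : Set S) (V : PSp k ↥R) : PSp k S where
  carrier := V.carrier
  sub s := ⨅ (r : R) (_ : s ≤ (r : S)), V.sub r
  mono := by
    intro s t h
    refine le_iInf fun r => le_iInf fun hr => ?_
    exact iInf_le_of_le r (iInf_le_of_le (h.trans hr) le_rfl)

/-- The restriction functor on morphisms. -/
def resHom (R : Set S) {V W : PSp k S} (f : PHom V W) : PHom (resS R V) (resS R W) :=
  ⟨f.toLinearMap, fun r x hx => f.maps ↑r x hx⟩

/-- The induction functor on morphisms. -/
def indHom (R : Set S) {V W : PSp k ↥R} (f : PHom V W) : PHom (indS R V) (indS R W) := by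
  refine ⟨f.toLinearMap, fun s x hx => ?_⟩
  have h1 : Submodule.map f.toLinearMap ((indS R V).sub s) ≤ (indS R W).sub s := by
    show Submodule.map f.toLinearMap (⨆ (r : R) (_ : (r : S) ≤ s), V.sub r) ≤ _
    rw [Submodule.map_iSup]
    refine iSup_mono fun r => ?_
    rw [Submodule.map_iSup]
    refine iSup_mono fun hr => ?_
    exact Submodule.map_le_iff_le_comap.mpr fun y hy => Submodule.mem_comap.mpr (f.maps r y hy)
  exact h1 (Submodule.mem_map_of_mem hx)

/-- The coinduction functor on morphisms. -/
def coindHom (R : Set S) {V W : PSp k ↥R} (f : PHom V W) : PHom (coindS R V) (coindS R W) := by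
  refine ⟨f.toLinearMap, fun s x hx => ?_⟩
  have key : ∀ y : V.carrier, y ∈ (⨅ (r : R) (_ : s ≤ (r : S)), V.sub r) →
      f.toLinearMap y ∈ (⨅ (r : R) (_ : s ≤ (r : S)), W.sub r) := fun y hy =>
    (Submodule.mem_iInf _).mpr fun r => (Submodule.mem_iInf _).mpr fun hr =>
      f.maps r y ((Submodule.mem_iInf _).mp ((Submodule.mem_iInf _).mp hy r) hr)
  exact key x hx

/-!
For `s ∉ R` the subspace `U_f(s) = f⁻¹(V(s))` is the largest one that `f` can send into `V(s)`,
so monotonicity there and properness of `f̂` there are automatic: `f(f⁻¹(V(s))) = V(s) ∩ im f`.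
On the ideal `R` the space `U_f` coincides with `U`, and `R` being down-closed is what makes
`U_f(s) = U(s) ≤ U(t)` for `s ≤ t ∈ R`.
-/

namespace PHom

-- Shadows the ambient `k` and `S`, so that `[Fintype S]` is not assumed.
variable {k : Type} [Field k] {S : Type} [PartialOrder S]
variable {R : Set S} {U : PSp k ↥R} {V : PSp k S} (f : PHom U (resS R V))

open Classical in
/-- The subspaces of the `S`-space `U_f`. -/
noncomputable def extSub (s : S) : Submodule k U.carrier :=
  if h : s ∈ R then U.sub ⟨s, h⟩ else (V.sub s).comap f.toLinearMap

theorem extSub_of_mem {s : S} (h : s ∈ R) : f.extSub s = U.sub ⟨s, h⟩ :=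
  dif_pos h

theorem extSub_of_notMem {s : S} (h : s ∉ R) :
    f.extSub s = (V.sub s).comap f.toLinearMap :=
  dif_neg h

theorem extSub_le_comap (s : S) : f.extSub s ≤ (V.sub s).comap f.toLinearMap := by
  by_cases h : s ∈ R
  · rw [f.extSub_of_mem h]
    exact fun x hx => f.maps ⟨s, h⟩ x hx
  · rw [f.extSub_of_notMem h]

theorem map_extSub_of_notMem {s : S} (h : s ∉ R) :
    (f.extSub s).map f.toLinearMap = V.sub s ⊓ LinearMap.range f.toLinearMap := by
  rw [f.extSub_of_notMem h]
  exact (Submodule.map_comap_eq _ _).trans (inf_comm _ _)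

theorem monotone_extSub (hR : IsLowerSet R) : Monotone f.extSub := by
  intro s t hst
  by_cases ht : t ∈ R
  · have hs : s ∈ R := hR hst ht
    rw [f.extSub_of_mem hs, f.extSub_of_mem ht]
    exact U.mono (show (⟨s, hs⟩ : ↥R) ≤ ⟨t, ht⟩ from hst)
  · rw [f.extSub_of_notMem ht]
    exact (f.extSub_le_comap s).trans (Submodule.comap_mono (V.mono hst))

/-- The `S`-space `U_f`. -/
noncomputable def extSpace (hR : IsLowerSet R) : PSp k S where
  carrier := U.carrier
  sub := f.extSub
  mono h := f.monotone_extSub hR h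

/-- The morphism `f̂ : U_f → V`. -/
noncomputable def extend (hR : IsLowerSet R) : PHom (f.extSpace hR) V :=
  ⟨f.toLinearMap, fun s _ hx => f.extSub_le_comap s hx⟩

theorem proper_iff_proper_extend (hR : IsLowerSet R) : f.Proper ↔ (f.extend hR).Proper := by
  constructor
  · intro hf s
    by_cases h : s ∈ R
    · exact (congrArg (Submodule.map f.toLinearMap) (f.extSub_of_mem h)).trans (hf ⟨s, h⟩)
    · exact f.map_extSub_of_notMem h
  · intro hf r
    exact (congrArg (Submodule.map f.toLinearMap) (f.extSub_of_mem r.2)).symm.trans (hf r)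

end PHom

open Classical in
/-- Let `R` be an ideal of `S`, `U` an `R`-space, `V` an `S`-space and
`f : U → res^S_R V`. The family `U_f` (with `U_f(r) = U(r)` for `r ∈ R` and
`U_f(t) = f⁻¹(V(t))` for `t ∉ R`) is a well-defined `S`-space, `f` gives a morphism
`f̂ : U_f → V` with `res^S_R f̂ = f`, and `f` is proper iff `f̂` is proper. -/
theorem stmt14 (R : Set S) (hR : IsLowerSet R) (U : PSp k ↥R) (V : PSp k S)
    (f : PHom U (resS R V)) (Xsub : S → Submodule k U.carrier)
    (hX : ∀ s, Xsub s = if h : s ∈ R then U.sub ⟨s, h⟩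
      else (V.sub s).comap f.toLinearMap) :
    -- U_f is an S-space
    Monotone Xsub ∧
    -- f gives a morphism f̂ : U_f → V (with the same underlying map, so res^S_R f̂ = f)
    (∀ s : S, ∀ x ∈ Xsub s, f.toLinearMap x ∈ V.sub s) ∧
    -- f is proper iff f̂ is proper
    ((∀ r : ↥R, (U.sub r).map f.toLinearMap = V.sub ↑r ⊓ LinearMap.range f.toLinearMap) ↔
      (∀ s : S, (Xsub s).map f.toLinearMap = V.sub s ⊓ LinearMap.range f.toLinearMap)) := by
  obtain rfl : Xsub = f.extSub := funext hX
  exact ⟨f.monotone_extSub hR, (f.extend hR).maps, f.proper_iff_proper_extend hR⟩
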